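/- One has cos L ≠ 1. Moreover, for every continuous function f : [0,L] → ℝ, the function ψ : [0,L] → ℝ defined by ψ(x) := −((1 − cos(x − L))/(1 − cos L))·∫₀^L (1 − cos y)·f(y) dy + ∫ₓ^L (1 − cos(x − y))·f(y) dy is three times continuously differentiable and satisfies ψ(0) = ψ(L) = 0, ψ'(L) = 0, and −ψ'(x) − ψ'''(x) = f(x) for all x ∈ [0,L]. In other words, ψ is an explicit inverse of the operator φ ↦ −φ' − φ''' under the boundary conditions φ(0) = φ(L) = 0, φ'(L) = 0. -/

import Mathlib

noncomputable def L : ℝ := 2 * Real.pi * Real.sqrt (7 / 3)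

/-!
The kernel `1 - cos (x - y)` and its first `x`-derivative vanish at `x = y` and its second
derivative there is `1`, so `∫ₓᴸ (1 - cos (x - y)) f y dy` solves `-φ' - φ''' = f` with
`φ(L) = φ'(L) = 0`. Expanding `cos (x - y)` and `sin (x - y)` reduces its derivatives to the
fundamental theorem of calculus. Adding a multiple of `1 - cos (x - L)`, which solves the
homogeneous equation with the same conditions at `L`, achieves `ψ(0) = 0`; this needs
`cos L ≠ 1`, i.e. that `√(7/3)` is not an integer.
-/

open Real Set intervalIntegral

lemma L_pos : 0 < L := by
  unfold L
  positivity

lemma cos_L_ne_one : cos L ≠ 1 := by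
  rw [Ne, cos_eq_one_iff]
  rintro ⟨n, hn⟩
  have hn : (n : ℝ) = √(7 / 3) := by
    unfold L at hn
    nlinarith [pi_pos]
  have h1 : (1 : ℝ) < n := by
    rw [hn, lt_sqrt zero_le_one]
    norm_num
  have h2 : (n : ℝ) < 2 := by
    rw [hn, sqrt_lt' two_pos]
    norm_num
  norm_cast at h1 h2
  omega

lemma ContinuousOn.exists_continuous_eqOn_Icc {α β : Type*} [LinearOrder α] [TopologicalSpace α]
    [OrderTopology α] [TopologicalSpace β] {f : α → β} {a b : α} (hab : a ≤ b)
    (hf : ContinuousOn f (Icc a b)) : ∃ g : α → β, Continuous g ∧ EqOn g f (Icc a b) :=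
  ⟨IccExtend hab ((Icc a b).domRestrict f), hf.domRestrict.Icc_extend',
    fun _ hx => IccExtend_of_mem hab _ hx⟩

lemma iteratedDerivWithin_eq_iteratedDeriv_of_eqOn {𝕜 F : Type*} [NontriviallyNormedField 𝕜]
    [NormedAddCommGroup F] [NormedSpace 𝕜 F] {n : ℕ} {f g : 𝕜 → F}
    {s : Set 𝕜} {x : 𝕜} (hs : UniqueDiffOn 𝕜 s)
    (hg : ContDiff 𝕜 n g) (hfg : EqOn f g s) (hx : x ∈ s) :
    iteratedDerivWithin n f s x = iteratedDeriv n g x := by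
  rw [iteratedDerivWithin_congr hfg hx, iteratedDerivWithin_eq_iteratedDeriv hs hg.contDiffAt hx]

lemma hasDerivAt_integral_left_of_continuous {E : Type*} [NormedAddCommGroup E] [NormedSpace ℝ E]
    [CompleteSpace E] {g : ℝ → E} (hg : Continuous g) (b x : ℝ) :
    HasDerivAt (fun u => ∫ y in u..b, g y) (-g x) x :=
  integral_hasDerivAt_left (hg.intervalIntegrable _ _) (hg.stronglyMeasurableAtFilter _ _)
    hg.continuousAt

section Kernel

variable {g : ℝ → ℝ} (b : ℝ)

lemma integral_cos_sub_mul (hg : Continuous g) (x : ℝ) :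
    ∫ y in x..b, cos (x - y) * g y
      = cos x * (∫ y in x..b, cos y * g y) + sin x * ∫ y in x..b, sin y * g y := by
  simp_rw [cos_sub, add_mul, mul_assoc]
  rw [integral_add, integral_const_mul, integral_const_mul] <;>
    exact Continuous.intervalIntegrable (by fun_prop) _ _

lemma integral_sin_sub_mul (hg : Continuous g) (x : ℝ) :
    ∫ y in x..b, sin (x - y) * g y
      = sin x * (∫ y in x..b, cos y * g y) - cos x * ∫ y in x..b, sin y * g y := by
  simp_rw [sin_sub, sub_mul, mul_assoc]
  rw [integral_sub, integral_const_mul, integral_const_mul] <;>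
    exact Continuous.intervalIntegrable (by fun_prop) _ _

lemma integral_one_sub_cos_sub_mul (hg : Continuous g) (x : ℝ) :
    ∫ y in x..b, (1 - cos (x - y)) * g y
      = (∫ y in x..b, g y) - ∫ y in x..b, cos (x - y) * g y := by
  simp_rw [sub_mul, one_mul]
  exact integral_sub (hg.intervalIntegrable _ _) (Continuous.intervalIntegrable (by fun_prop) _ _)

lemma hasDerivAt_integral_cos_sub_mul (hg : Continuous g) (x : ℝ) :
    HasDerivAt (fun u => ∫ y in u..b, cos (u - y) * g y)
      (-(∫ y in x..b, sin (x - y) * g y) - g x) x := by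
  have hc := hasDerivAt_integral_left_of_continuous (g := fun y => cos y * g y) (by fun_prop) b x
  have hs := hasDerivAt_integral_left_of_continuous (g := fun y => sin y * g y) (by fun_prop) b x
  rw [funext (integral_cos_sub_mul b hg), integral_sin_sub_mul b hg]
  refine (((hasDerivAt_cos x).mul hc).add ((hasDerivAt_sin x).mul hs)).congr_deriv ?_
  linear_combination -g x * sin_sq_add_cos_sq x

lemma hasDerivAt_integral_sin_sub_mul (hg : Continuous g) (x : ℝ) :
    HasDerivAt (fun u => ∫ y in u..b, sin (u - y) * g y)
      (∫ y in x..b, cos (x - y) * g y) x := by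
  have hc := hasDerivAt_integral_left_of_continuous (g := fun y => cos y * g y) (by fun_prop) b x
  have hs := hasDerivAt_integral_left_of_continuous (g := fun y => sin y * g y) (by fun_prop) b x
  rw [funext (integral_sin_sub_mul b hg), integral_cos_sub_mul b hg]
  refine (((hasDerivAt_sin x).mul hc).sub ((hasDerivAt_cos x).mul hs)).congr_deriv ?_
  ring

end Kernel

/-- The paper's `ψ`, with `L` replaced by `b` and the coefficient of `1 - cos (x - b)` left
free. -/
noncomputable def psi (b c : ℝ) (g : ℝ → ℝ) (x : ℝ) : ℝ :=
  c * (1 - cos (x - b)) + ∫ y in x..b, (1 - cos (x - y)) * g y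

noncomputable def psiDeriv (b c : ℝ) (g : ℝ → ℝ) (x : ℝ) : ℝ :=
  c * sin (x - b) + ∫ y in x..b, sin (x - y) * g y

noncomputable def psiDeriv2 (b c : ℝ) (g : ℝ → ℝ) (x : ℝ) : ℝ :=
  c * cos (x - b) + ∫ y in x..b, cos (x - y) * g y

section Psi

variable {g : ℝ → ℝ} (b c : ℝ)

lemma hasDerivAt_psi (hg : Continuous g) (x : ℝ) :
    HasDerivAt (psi b c g) (psiDeriv b c g x) x := by
  have h := (((hasDerivAt_id x).sub_const b).cos.const_sub 1 |>.const_mul c).add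
    ((hasDerivAt_integral_left_of_continuous hg b x).sub (hasDerivAt_integral_cos_sub_mul b hg x))
  rw [show psi b c g = _ from funext fun u => by rw [psi, integral_one_sub_cos_sub_mul b hg]]
  refine h.congr_deriv ?_
  simp only [psiDeriv, id]
  ring

lemma hasDerivAt_psiDeriv (hg : Continuous g) (x : ℝ) :
    HasDerivAt (psiDeriv b c g) (psiDeriv2 b c g x) x := by
  refine ((((hasDerivAt_id x).sub_const b).sin.const_mul c).add
    (hasDerivAt_integral_sin_sub_mul b hg x)).congr_deriv ?_
  simp only [psiDeriv2, id]
  ring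

lemma hasDerivAt_psiDeriv2 (hg : Continuous g) (x : ℝ) :
    HasDerivAt (psiDeriv2 b c g) (-psiDeriv b c g x - g x) x := by
  refine ((((hasDerivAt_id x).sub_const b).cos.const_mul c).add
    (hasDerivAt_integral_cos_sub_mul b hg x)).congr_deriv ?_
  simp only [psiDeriv, id]
  ring

lemma deriv_psi (hg : Continuous g) : deriv (psi b c g) = psiDeriv b c g :=
  funext fun x => (hasDerivAt_psi b c hg x).deriv

lemma deriv_psiDeriv (hg : Continuous g) : deriv (psiDeriv b c g) = psiDeriv2 b c g :=
  funext fun x => (hasDerivAt_psiDeriv b c hg x).deriv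

lemma deriv_psiDeriv2 (hg : Continuous g) :
    deriv (psiDeriv2 b c g) = fun x => -psiDeriv b c g x - g x :=
  funext fun x => (hasDerivAt_psiDeriv2 b c hg x).deriv

lemma contDiff_psi (hg : Continuous g) : ContDiff ℝ 3 (psi b c g) := by
  have hd1 : Differentiable ℝ (psiDeriv b c g) := fun x =>
    (hasDerivAt_psiDeriv b c hg x).differentiableAt
  have h2 : ContDiff ℝ 1 (psiDeriv2 b c g) := by
    refine contDiff_succ_iff_deriv (n := 0).2
      ⟨fun x => (hasDerivAt_psiDeriv2 b c hg x).differentiableAt, by simp, ?_⟩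
    rw [deriv_psiDeriv2 b c hg, contDiff_zero]
    exact hd1.continuous.neg.sub hg
  have h1 : ContDiff ℝ 2 (psiDeriv b c g) :=
    contDiff_succ_iff_deriv (n := 1).2 ⟨hd1, by simp, by rwa [deriv_psiDeriv b c hg]⟩
  exact contDiff_succ_iff_deriv (n := 2).2 ⟨fun x => (hasDerivAt_psi b c hg x).differentiableAt,
    by simp, by rwa [deriv_psi b c hg]⟩

lemma iteratedDeriv_one_psi (hg : Continuous g) :
    iteratedDeriv 1 (psi b c g) = psiDeriv b c g := by
  rw [iteratedDeriv_one, deriv_psi b c hg]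

lemma neg_iteratedDeriv_one_sub_iteratedDeriv_three_psi (hg : Continuous g) (x : ℝ) :
    -iteratedDeriv 1 (psi b c g) x - iteratedDeriv 3 (psi b c g) x = g x := by
  simp only [iteratedDeriv_succ, iteratedDeriv_zero, deriv_psi b c hg, deriv_psiDeriv b c hg,
    deriv_psiDeriv2 b c hg]
  ring

lemma psi_self : psi b c g b = 0 := by
  simp [psi]

lemma psiDeriv_self : psiDeriv b c g b = 0 := by
  simp [psiDeriv]

end Psi

/-- cos L ≠ 1, and the explicit formula ψ gives an inverse for the
operator φ ↦ −φ' − φ''' under the boundary conditions φ(0) = φ(L) = 0, φ'(L) = 0. -/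
theorem stmt_9 :
    Real.cos L ≠ 1 ∧
    ∀ f : ℝ → ℝ, ContinuousOn f (Set.Icc 0 L) →
      ∀ ψ : ℝ → ℝ,
        (∀ x, ψ x =
          -((1 - Real.cos (x - L)) / (1 - Real.cos L))
              * (∫ y in (0 : ℝ)..L, (1 - Real.cos y) * f y)
            + ∫ y in x..L, (1 - Real.cos (x - y)) * f y) →
        ContDiffOn ℝ 3 ψ (Set.Icc 0 L) ∧
        ψ 0 = 0 ∧ ψ L = 0 ∧
        iteratedDerivWithin 1 ψ (Set.Icc 0 L) L = 0 ∧
        (∀ x ∈ Set.Icc (0 : ℝ) L,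
          -(iteratedDerivWithin 1 ψ (Set.Icc 0 L) x)
            - iteratedDerivWithin 3 ψ (Set.Icc 0 L) x = f x) := by
  refine ⟨cos_L_ne_one, fun f hf ψ hψ => ?_⟩
  obtain ⟨g, hg, hgf⟩ := hf.exists_continuous_eqOn_Icc L_pos.le
  set c := -(∫ y in (0 : ℝ)..L, (1 - cos y) * f y) / (1 - cos L)
  have hψ_eq : EqOn ψ (psi L c g) (Icc 0 L) := fun x hx => by
    have hfg : ∀ y ∈ uIcc x L, (1 - cos (x - y)) * f y = (1 - cos (x - y)) * g y :=
      fun y hy => by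
        rw [uIcc_of_le hx.2] at hy
        rw [hgf ⟨hx.1.trans hy.1, hy.2⟩]
    rw [hψ x, psi, integral_congr hfg]
    ring
  have hψ_diff := contDiff_psi L c hg
  have hderiv {n : ℕ} (hn : n ≤ 3) {x : ℝ} (hx : x ∈ Icc 0 L) :
      iteratedDerivWithin n ψ (Icc 0 L) x = iteratedDeriv n (psi L c g) x :=
    iteratedDerivWithin_eq_iteratedDeriv_of_eqOn (uniqueDiffOn_Icc L_pos)
      (hψ_diff.of_le (by exact_mod_cast hn)) hψ_eq hx
  have hL : L ∈ Icc 0 L := right_mem_Icc.2 L_pos.le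
  refine ⟨hψ_diff.contDiffOn.congr hψ_eq, ?_, ?_, ?_, fun x hx => ?_⟩
  · have hden : 1 - cos L ≠ 0 := sub_ne_zero.2 cos_L_ne_one.symm
    simp only [hψ 0, zero_sub, cos_neg]
    field_simp
    ring
  · rw [hψ_eq hL, psi_self]
  · rw [hderiv (by norm_num) hL, iteratedDeriv_one_psi L c hg, psiDeriv_self]
  · rw [hderiv (by norm_num) hx, hderiv le_rfl hx, ← hgf hx]
    exact neg_iteratedDeriv_one_sub_iteratedDeriv_three_psi L c hg x
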